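/- Let A = ℤ[[q−1]] be the power series ring over ℤ in the variable q−1 (so A = PowerSeries ℤ with q := 1 + X, a unit of A). For n ∈ ℤ set [n]_q := (q^n − 1)/(q − 1) ∈ A, which is well defined since q is a unit and q−1 divides q^n−1 for every n ∈ ℤ (for n ≥ 0, [n]_q = 1 + q + ⋯ + q^{n−1}). Let ∇_q be the A-linear endomorphism of the module A[T, T^{-1}] of Laurent polynomials over A determined by ∇_q(T^n) = [n]_q·T^{n−1} for all n ∈ ℤ. Then the cokernel of ∇_q is isomorphic, as an A-module, to A ⊕ ⨁_{n ∈ ℤ, n ≠ −1} A/([n+1]_q·A). -/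

import Mathlib

open DirectSum

/-! The Jackson derivative shifts degrees down by one and multiplies the coefficient of `Tⁿ` by
`[n]_q`, so its image consists exactly of the Laurent polynomials whose coefficient of `Tᵐ` lies
in `([m+1]_q)`, and its cokernel is `⨁ₘ A ⧸ ([m+1]_q)`. The summand `m = -1` is `A` itself, because
`[0]_q · (q - 1) = 0` and `q - 1` is a nonzerodivisor of `ℤ[[q-1]]`. -/

theorem q_isUnit : IsUnit (1 + PowerSeries.X : PowerSeries ℤ) := by
  rw [PowerSeries.isUnit_iff_constantCoeff]
  simp

open LaurentPolynomial LinearMap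

namespace DirectSum

variable {R ι : Type*} [Ring R] {M : ι → Type*} [∀ i, AddCommGroup (M i)] [∀ i, Module R (M i)]

def mkQ (p : ∀ i, Submodule R (M i)) : (⨁ i, M i) →ₗ[R] ⨁ i, M i ⧸ p i :=
  DFinsupp.mapRange.linearMap fun i => (p i).mkQ

theorem mkQ_surjective (p : ∀ i, Submodule R (M i)) : Function.Surjective (mkQ p) :=
  (DFinsupp.mapRange_surjective _ fun _ => map_zero _).mpr fun i => (p i).mkQ_surjective

theorem mkQ_apply (p : ∀ i, Submodule R (M i)) (x : ⨁ i, M i) (i : ι) :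
    mkQ p x i = Submodule.Quotient.mk (x i) :=
  rfl

theorem mem_ker_mkQ {p : ∀ i, Submodule R (M i)} {x : ⨁ i, M i} :
    x ∈ ker (mkQ p) ↔ ∀ i, x i ∈ p i := by
  simp only [mem_ker, DirectSum.ext_iff, mkQ_apply, zero_apply, Submodule.Quotient.mk_eq_zero]

variable [DecidableEq ι]

noncomputable def lequivProdDirectSumNe (i₀ : ι) :
    (⨁ i, M i) ≃ₗ[R] M i₀ × ⨁ i : {i // i ≠ i₀}, M i :=
  lequivCongrLeft R (Equiv.optionSubtypeNe i₀).symm ≪≫ₗ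
    lequivProdDirectSum R (α := fun k => M (Equiv.optionSubtypeNe i₀ k))

end DirectSum

namespace LaurentPolynomial

section CommSemiring

variable {R : Type*} [CommSemiring R]

theorem coeff_apply_of_map_T {b : ℤ → R} {D : R[T;T⁻¹] →ₗ[R] R[T;T⁻¹]}
    (hD : ∀ n, D (T n) = b n • T (n - 1)) (f : R[T;T⁻¹]) (m : ℤ) :
    (D f).coeff m = b (m + 1) * f.coeff (m + 1) := by
  induction f using LaurentPolynomial.induction_on' with
  | add p q hp hq => simp [hp, hq, mul_add]
  | C_mul_T n a =>
    rw [← smul_eq_C_mul, map_smul, hD]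
    simp only [smul_smul, AddMonoidAlgebra.coeff_smul, Finsupp.coe_smul, Pi.smul_apply, T_apply,
      smul_eq_mul, mul_ite, mul_one, mul_zero]
    by_cases h : n = m + 1
    · subst h
      simp [mul_comm]
    · rw [if_neg (by omega), if_neg h]

end CommSemiring

section CommRing

variable {R : Type*} [CommRing R]

open Classical in
noncomputable def coeffMkQ (I : ℤ → Ideal R) : R[T;T⁻¹] →ₗ[R] ⨁ n, R ⧸ I n :=
  DirectSum.mkQ I ∘ₗ (finsuppLequivDFinsupp R).toLinearMap ∘ₗ
    (AddMonoidAlgebra.coeffLinearEquiv R).toLinearMap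

open Classical in
theorem coeffMkQ_surjective (I : ℤ → Ideal R) : Function.Surjective (coeffMkQ I) :=
  (DirectSum.mkQ_surjective I).comp
    ((finsuppLequivDFinsupp R).surjective.comp (AddMonoidAlgebra.coeffLinearEquiv R).surjective)

theorem mem_ker_coeffMkQ {I : ℤ → Ideal R} {f : R[T;T⁻¹]} :
    f ∈ ker (coeffMkQ I) ↔ ∀ n, f.coeff n ∈ I n :=
  DirectSum.mem_ker_mkQ

theorem range_eq_ker_coeffMkQ_of_map_T {b : ℤ → R} {D : R[T;T⁻¹] →ₗ[R] R[T;T⁻¹]}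
    (hD : ∀ n, D (T n) = b n • T (n - 1)) :
    range D = ker (coeffMkQ fun n => Ideal.span {b (n + 1)}) := by
  ext f
  rw [mem_ker_coeffMkQ]
  constructor
  · rintro ⟨g, rfl⟩ n
    rw [coeff_apply_of_map_T hD]
    exact Ideal.mem_span_singleton.mpr (dvd_mul_right _ _)
  · intro hf
    rw [← AddMonoidAlgebra.sum_coeff_single f]
    refine Submodule.finsuppSum_mem _ _ _ _ fun n _ => ?_
    obtain ⟨c, hc⟩ := Ideal.mem_span_singleton'.mp (hf n)
    refine ⟨c • T (n + 1), ?_⟩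
    rw [map_smul, hD, add_sub_cancel_right, smul_smul, hc, single_eq_C_mul_T, smul_eq_C_mul]

noncomputable def quotRangeEquivOfMapT {b : ℤ → R} {D : R[T;T⁻¹] →ₗ[R] R[T;T⁻¹]}
    (hD : ∀ n, D (T n) = b n • T (n - 1)) :
    (R[T;T⁻¹] ⧸ range D) ≃ₗ[R] ⨁ n, R ⧸ Ideal.span {b (n + 1)} :=
  (Submodule.quotEquivOfEq _ _ (range_eq_ker_coeffMkQ_of_map_T hD)).trans
    ((coeffMkQ fun n => Ideal.span {b (n + 1)}).quotKerEquivOfSurjective (coeffMkQ_surjective _))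

end CommRing
end LaurentPolynomial

/-- Let `A = ℤ[[q-1]]` be the power series ring (in the variable
`X = q - 1`), `q := 1 + X` its unit, and for `n : ℤ` let `b n = [n]_q` be the `q`-analogue
of `n`, characterized by `[n]_q · (q - 1) = qⁿ - 1`. Let `nabla_q` be the `A`-linear
endomorphism of the module of Laurent polynomials `A[T,T⁻¹]` with `nabla_q(Tⁿ) = [n]_q·Tⁿ⁻¹`
(the Jackson `q`-derivative). Then the cokernel of `nabla_q` is isomorphic as an `A`-module to
`A ⊕ ⨁_{n ≠ -1} A/([n+1]_q)`. -/
theorem coker_q_deRham_Gm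
    (b : ℤ → PowerSeries ℤ)
    (hb : ∀ n : ℤ, b n * ((1 + PowerSeries.X) - 1) =
      ((q_isUnit.unit ^ n : (PowerSeries ℤ)ˣ) : PowerSeries ℤ) - 1)
    (nabla : LaurentPolynomial (PowerSeries ℤ) →ₗ[PowerSeries ℤ]
          LaurentPolynomial (PowerSeries ℤ))
    (hnabla : ∀ n : ℤ, nabla (LaurentPolynomial.T n) = b n • LaurentPolynomial.T (n - 1)) :
    Nonempty ((LaurentPolynomial (PowerSeries ℤ) ⧸ LinearMap.range nabla) ≃ₗ[PowerSeries ℤ]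
      (PowerSeries ℤ ×
        ⨁ (n : {m : ℤ // m ≠ -1}), PowerSeries ℤ ⧸ Ideal.span {b ((n : ℤ) + 1)})) := by
  have hb0 : b 0 = 0 := by
    have h := hb 0
    rw [zpow_zero, Units.val_one, sub_self, add_sub_cancel_left] at h
    exact (mul_eq_zero.mp h).resolve_right PowerSeries.X_ne_zero
  have hbot : Ideal.span {b (-1 + 1)} = ⊥ := by
    rw [neg_add_cancel, hb0, Ideal.span_singleton_eq_bot]
  exact ⟨quotRangeEquivOfMapT hnabla ≪≫ₗ DirectSum.lequivProdDirectSumNe (-1) ≪≫ₗ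
    (Submodule.quotEquivOfEqBot _ hbot).prodCongr (LinearEquiv.refl _ _)⟩
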